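/- arXiv:2005.00164 — 3 statements merged into one kernel-verified Lean document; each statement's English description precedes it below -/
import Mathlib

section
/- Let F_n be a free group with fixed free basis x_1,...,x_n and let ι : F_n → F_n be the automorphism sending each x_i to x_i⁻¹. An automorphism Φ of F_n sends each basis element x_i to a palindrome (a word in the x_i spelled the same forwards and backwards) if and only if Φ commutes with ι, i.e. Φ ∘ ι = ι ∘ Φ. -/
/-- A reduced word in a free group is a palindrome if it reads the same
forwards and backwards (letter-for-letter, with signs). -/
def IsPalindrome {n : ℕ} (w : FreeGroup (Fin n)) : Prop :=
  w.toWord.reverse = w.toWord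

/-- The automorphism of the free group inverting each basis element,
given as the induced endomorphism. -/
noncomputable def invGens (n : ℕ) : FreeGroup (Fin n) →* FreeGroup (Fin n) :=
  FreeGroup.lift fun i => (FreeGroup.of i)⁻¹

/-!
Let `ι` invert every generator. On a reduced word, `ι` flips the exponent of each letter in
place and the result is again reduced, while inversion flips every exponent and also reverses
the word. Hence `ι w = w⁻¹` exactly when the reduced word of `w` is a palindrome. Since `ι` and
`Φ` are homomorphisms, `Φ ∘ ι = ι ∘ Φ` can be tested on the generators, where it reads
`ι (Φ xᵢ) = Φ (xᵢ⁻¹) = (Φ xᵢ)⁻¹`.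
-/

namespace FreeGroup

variable {α : Type*}

noncomputable def invertGenerators : FreeGroup α →* FreeGroup α :=
  lift fun a => (of a)⁻¹

def invLetter (x : α × Bool) : α × Bool := (x.1, !x.2)

theorem invLetter_involutive : Function.Involutive (invLetter (α := α)) := fun x => by
  simp [invLetter]

theorem invRev_eq_reverse_map_invLetter (L : List (α × Bool)) :
    invRev L = (L.map invLetter).reverse := rfl

theorem IsReduced.map_invLetter {L : List (α × Bool)} (h : IsReduced L) :
    IsReduced (L.map invLetter) :=
  List.isChain_map_of_isChain _ (fun a b hab heq => by simpa [invLetter] using hab heq) h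

theorem invertGenerators_of (a : α) : invertGenerators (of a) = (of a)⁻¹ :=
  lift_apply_of

theorem invertGenerators_mk (L : List (α × Bool)) :
    invertGenerators (mk L) = mk (L.map invLetter) := by
  conv_rhs => rw [← lift_of_apply (mk _)]
  simp only [invertGenerators, lift_mk, List.map_map]
  congr 1
  refine List.map_congr_left fun ⟨a, b⟩ _ => ?_
  cases b <;> simp [invLetter]

variable [DecidableEq α]

theorem toWord_invertGenerators (w : FreeGroup α) :
    (invertGenerators w).toWord = w.toWord.map invLetter := by
  conv_lhs => rw [← mk_toWord (x := w)]
  rw [invertGenerators_mk, toWord_mk, isReduced_toWord.map_invLetter.reduce_eq]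

theorem invertGenerators_eq_inv_iff (w : FreeGroup α) :
    invertGenerators w = w⁻¹ ↔ w.toWord.reverse = w.toWord := by
  rw [← toWord_injective.eq_iff, toWord_invertGenerators, toWord_inv,
    invRev_eq_reverse_map_invLetter, ← List.map_reverse,
    (List.map_injective_iff.2 invLetter_involutive.injective).eq_iff, eq_comm]

theorem forall_map_invertGenerators_comm_iff (f : FreeGroup α →* FreeGroup α) :
    (∀ w, f (invertGenerators w) = invertGenerators (f w)) ↔
      ∀ a, (f (of a)).toWord.reverse = (f (of a)).toWord := by
  have on_generators (a : α) :
      f (invertGenerators (of a)) = invertGenerators (f (of a)) ↔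
        (f (of a)).toWord.reverse = (f (of a)).toWord := by
    rw [← invertGenerators_eq_inv_iff, invertGenerators_of, _root_.map_inv, eq_comm]
  refine ⟨fun h a => (on_generators a).1 (h _), fun h w => ?_⟩
  have hcomp : f.comp invertGenerators = invertGenerators.comp f :=
    ext_hom _ _ fun a => (on_generators a).2 (h a)
  exact DFunLike.congr_fun hcomp w

end FreeGroup

/-- An automorphism of a free group sends each basis element to a palindrome
if and only if it commutes with the automorphism inverting each generator. -/
theorem palindromic_iff_commutes_with_inversion {n : ℕ}
    (Φ : FreeGroup (Fin n) ≃* FreeGroup (Fin n)) :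
    (∀ i : Fin n, IsPalindrome (Φ (FreeGroup.of i))) ↔
      (∀ w : FreeGroup (Fin n), Φ (invGens n w) = invGens n (Φ w)) :=
  (FreeGroup.forall_map_invertGenerators_comm_iff Φ.toMonoidHom).symm
end

section
/- Let G act on a connected graph X by graph automorphisms, and let F be a subset of X whose G-translates cover X and which is connected. Then G is generated by the set S = { g ∈ G : gF ∩ F ≠ ∅ }. -/
open SimpleGraph Pointwise

/-- Macbeath's generation criterion for graphs: if `G` acts on a connected
graph `X` by graph automorphisms and `F` is a connected subset whose
`G`-translates cover `X` (its vertices and its edges), then `G` is generated by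
the elements `g` with `g • F ∩ F ≠ ∅`. -/
theorem macbeath_generation
    {X G : Type*} [Group G] [MulAction G X]
    (T : SimpleGraph X) (hconn : T.Connected)
    (hact : ∀ (g : G) (u v : X), T.Adj u v → T.Adj (g • u) (g • v))
    (F : Set X) (hF : (T.induce F).Connected)
    (hcoverV : ∀ x : X, ∃ g : G, g • x ∈ F)
    (hcoverE : ∀ u v : X, T.Adj u v → ∃ g : G, g • u ∈ F ∧ g • v ∈ F) :
    Subgroup.closure {g : G | (g • F ∩ F).Nonempty} = ⊤ := by
  set H := Subgroup.closure {g : G | (g • F ∩ F).Nonempty} with hHdef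
  have mem_S : ∀ (g : G) (x : X), x ∈ F → g • x ∈ F → g ∈ H := by
    intro g x hx hgx
    exact Subgroup.subset_closure ⟨g • x, Set.smul_mem_smul_set hx, hgx⟩
  have key : ∀ {u v : X}, T.Walk u v → ∀ g h : G, g • u ∈ F → h • v ∈ F →
      g * h⁻¹ ∈ H := by
    intro u v w
    induction w with
    | nil =>
      intro g h hg hh
      refine mem_S _ _ hh ?_
      rw [smul_smul, inv_mul_cancel_right]; exact hg
    | @cons a b c hadj p ih =>
      intro g h hg hh
      obtain ⟨k, hka, hkb⟩ := hcoverE a b hadj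
      have h1 : g * k⁻¹ ∈ H := by
        refine mem_S _ _ hka ?_
        rw [smul_smul, inv_mul_cancel_right]; exact hg
      have h2 : k * h⁻¹ ∈ H := ih k h hkb hh
      have : g * h⁻¹ = (g * k⁻¹) * (k * h⁻¹) := by group
      rw [this]; exact mul_mem h1 h2
  obtain ⟨⟨x0, hx0⟩⟩ := hF.nonempty
  rw [eq_top_iff]
  intro g _
  have hw : T.Walk (g⁻¹ • x0) x0 := (hconn (g⁻¹ • x0) x0).some
  have := key hw g 1 (by simpa using hx0) (by simpa using hx0)
  simpa using this
end

section
/- Let G be a finitely generated group acting on a tree T without inversions such that every element of G fixes some vertex of T. Then there is a single vertex of T fixed by all of G. -/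
/-!
Fixed-point sets of automorphisms of a tree are subtrees, and finitely many pairwise intersecting
subtrees have a common vertex (Helly), so it suffices that any two generators `g`, `h` have a common
fixed vertex. For an elliptic `e`, the path from any vertex `w` to `e • w` goes from `w` to the
fixed-point set of `e` and back, so its midpoint is fixed by `e`. Taking `w` fixed by `g * h`, the
path from `w` to `h • w = g⁻¹ • w` then has a midpoint fixed by both `h` and `g⁻¹`.
-/

open Function MulAction

namespace SimpleGraph

variable {V : Type*} {T : SimpleGraph V}

def IsPathConvex (T : SimpleGraph V) (S : Set V) : Prop :=
  ∀ ⦃a b : V⦄ (p : T.Walk a b), p.IsPath → a ∈ S → b ∈ S → ∀ z ∈ p.support, z ∈ S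

lemma IsPathConvex.inter {A B : Set V} (hA : T.IsPathConvex A) (hB : T.IsPathConvex B) :
    T.IsPathConvex (A ∩ B) :=
  fun _ _ p hp ha hb z hz => ⟨hA p hp ha.1 hb.1 z hz, hB p hp ha.2 hb.2 z hz⟩

lemma Walk.mem_head?_edges_iff {u v : V} {p : T.Walk u v} {e : Sym2 V} :
    e ∈ p.edges.head? ↔ ¬p.Nil ∧ e = s(u, p.snd) := by
  cases p <;> simp [eq_comm]

theorem IsAcyclic.isPath_reverse_append (hT : T.IsAcyclic) {u v w : V} {p : T.Walk v u}
    {q : T.Walk v w} (hp : p.IsPath) (hq : q.IsPath) (hsnd : ¬p.Nil → ¬q.Nil → p.snd ≠ q.snd) :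
    (p.reverse.append q).IsPath := by
  rw [hT.isPath_iff_isChain, Walk.edges_append, Walk.edges_reverse, List.isChain_append,
    List.getLast?_reverse]
  refine ⟨List.isChain_reverse.2 (((hT.isPath_iff_isChain p).1 hp).imp fun _ _ => Ne.symm),
    (hT.isPath_iff_isChain q).1 hq, fun e he e' he' hee' => ?_⟩
  subst hee'
  obtain ⟨hp', rfl⟩ := Walk.mem_head?_edges_iff.1 he
  obtain ⟨hq', he'⟩ := Walk.mem_head?_edges_iff.1 he'
  exact hsnd hp' hq' (Sym2.congr_right.1 he')

lemma Connected.exists_isPath_snd_notMem (hT : T.Connected) {S : Set V} (hS : S.Nonempty)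
    (c : V) : ∃ m ∈ S, ∃ s : T.Walk m c, s.IsPath ∧ (¬s.Nil → s.snd ∉ S) := by
  set m := argminOn (T.dist · c) S hS
  obtain ⟨s, hs, hlen⟩ := hT.exists_path_of_dist m c
  refine ⟨m, argminOn_mem _ S hS, s, hs, fun hnil hsnd => ?_⟩
  have hmin : T.dist m c ≤ T.dist s.snd c := argminOn_le (T.dist · c) S hsnd
  have htail : s.tail.length + 1 = s.length := Walk.length_tail_add_one hnil
  have hdist : T.dist s.snd c ≤ s.tail.length := T.dist_le s.tail
  omega

theorem IsAcyclic.isPathConvex_fixedPoints (hT : T.IsAcyclic) {f : T →g T}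
    (hf : Injective f) : T.IsPathConvex (fixedPoints f) := by
  intro a b p hp (ha : f a = a) (hb : f b = b) z hz
  have hfp : (p.map f).copy ha hb = p :=
    congrArg Subtype.val <| (hT.subsingleton_path a b).elim
      ⟨_, (Walk.isPath_copy ..).2 (hp.map hf)⟩ ⟨p, hp⟩
  obtain ⟨i, rfl, -⟩ := Walk.mem_support_iff_exists_getVert.1 hz
  calc f (p.getVert i) = ((p.map f).copy ha hb).getVert i := by simp [Walk.getVert_map]
    _ = p.getVert i := by rw [hfp]

/-- The path from `w` to `f w` runs from `w` to its nearest fixed vertex `y` and back out along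
the image of the same path, so `y` is its midpoint. -/
theorem IsTree.map_getVert_half_length (hT : T.IsTree) {f : T →g T} (hf : Injective f)
    (hfix : (fixedPoints f).Nonempty) {w v : V} (p : T.Walk w v) (hp : p.IsPath) (hv : f w = v) :
    f (p.getVert (p.length / 2)) = p.getVert (p.length / 2) := by
  subst hv
  obtain ⟨y, hy : f y = y, s, hs, hsnd⟩ := hT.connected.exists_isPath_snd_notMem hfix w
  set q : T.Walk y (f w) := (s.map f).copy hy rfl
  have hq : q.IsPath := (Walk.isPath_copy ..).2 (hs.map hf)
  have hpq : p = s.reverse.append q :=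
    congrArg Subtype.val <| (hT.isAcyclic.subsingleton_path w (f w)).elim ⟨p, hp⟩
      ⟨_, hT.isAcyclic.isPath_reverse_append hs hq fun hnil _ h =>
        hsnd hnil (by simpa [q, Walk.snd, Walk.getVert_map, IsFixedPt] using h.symm)⟩
  have hlen : p.length / 2 = s.reverse.length := by simp [hpq, q]; omega
  rw [hlen, hpq, Walk.getVert_append]
  simpa [q] using hy

/-- The common point is the vertex of the path from `a` to `b` nearest to `c`. -/
theorem IsTree.inter_inter_nonempty (hT : T.IsTree) {A B C : Set V} (hA : T.IsPathConvex A)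
    (hB : T.IsPathConvex B) (hC : T.IsPathConvex C) (hAB : (A ∩ B).Nonempty)
    (hBC : (B ∩ C).Nonempty) (hAC : (A ∩ C).Nonempty) : (A ∩ B ∩ C).Nonempty := by
  classical
  obtain ⟨a, haA, haB⟩ := hAB
  obtain ⟨b, hbB, hbC⟩ := hBC
  obtain ⟨c, hcA, hcC⟩ := hAC
  obtain ⟨p, hp⟩ := hT.connected.exists_isPath a b
  obtain ⟨m, hm, s, hs, hsnd⟩ :=
    hT.connected.exists_isPath_snd_notMem (S := {x | x ∈ p.support}) ⟨a, p.start_mem_support⟩ c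
  have hac : ((p.takeUntil m hm).reverse.reverse.append s).IsPath :=
    hT.isAcyclic.isPath_reverse_append (hp.takeUntil hm).reverse hs fun _ hnil h =>
      hsnd hnil <| h ▸ p.support_takeUntil_subset_support hm (by simp)
  have hbc : ((p.dropUntil m hm).reverse.append s).IsPath :=
    hT.isAcyclic.isPath_reverse_append (hp.dropUntil hm) hs fun _ hnil h =>
      hsnd hnil <| h ▸ p.support_dropUntil_subset_support hm (Walk.getVert_mem_support _ 1)
  exact ⟨m, ⟨hA _ hac haA hcA m (by simp), hB p hp haB hbB m hm⟩, hC _ hbc hbC hcC m (by simp)⟩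

theorem IsTree.biInter_nonempty {ι : Type*} (hT : T.IsTree) (s : Finset ι) (F : ι → Set V)
    (hconv : ∀ i ∈ s, T.IsPathConvex (F i)) (hinter : ∀ i ∈ s, ∀ j ∈ s, (F i ∩ F j).Nonempty) :
    (⋂ i ∈ s, F i).Nonempty := by
  classical
  induction s using Finset.induction_on generalizing F with
  | empty => exact hT.nonempty.elim fun v => ⟨v, by simp⟩
  | insert i s _ ih =>
    have hi : i ∈ insert i s := s.mem_insert_self i
    have hs {j : ι} (hj : j ∈ s) : j ∈ insert i s := Finset.mem_insert_of_mem hj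
    rcases s.eq_empty_or_nonempty with rfl | ⟨j₀, hj₀⟩
    · simpa using hinter i hi i hi
    obtain ⟨x, hx⟩ := ih (fun j => F j ∩ F i) (fun j hj => (hconv j (hs hj)).inter (hconv i hi))
      fun j hj k hk =>
        (hT.inter_inter_nonempty (hconv j (hs hj)) (hconv k (hs hk)) (hconv i hi)
          (hinter j (hs hj) k (hs hk)) (hinter k (hs hk) i hi) (hinter j (hs hj) i hi)).mono
          fun x hx => ⟨⟨hx.1.1, hx.2⟩, hx.1.2, hx.2⟩
    simp only [Set.mem_iInter] at hx
    refine ⟨x, ?_⟩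
    simp only [Finset.set_biInter_insert, Set.mem_inter_iff, Set.mem_iInter]
    exact ⟨(hx j₀ hj₀).2, fun j hj => (hx j hj).1⟩

section Action

variable {G : Type*} [Group G] [MulAction G V]

def smulHom (hact : ∀ (g : G) (u v : V), T.Adj u v → T.Adj (g • u) (g • v)) (g : G) :
    T →g T where
  toFun := (g • ·)
  map_rel' := hact g _ _

theorem IsAcyclic.isPathConvex_fixedBy (hT : T.IsAcyclic)
    (hact : ∀ (g : G) (u v : V), T.Adj u v → T.Adj (g • u) (g • v)) (g : G) :
    T.IsPathConvex (fixedBy V g) :=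
  hT.isPathConvex_fixedPoints (f := smulHom hact g) (MulAction.injective g)

theorem IsTree.fixedBy_inter_nonempty (hT : T.IsTree)
    (hact : ∀ (g : G) (u v : V), T.Adj u v → T.Adj (g • u) (g • v)) {g h : G}
    (hg : (fixedBy V g).Nonempty) (hh : (fixedBy V h).Nonempty)
    (hgh : (fixedBy V (g * h)).Nonempty) :
    (fixedBy V g ∩ fixedBy V h).Nonempty := by
  obtain ⟨w, hw⟩ := hgh
  have hw' : g⁻¹ • w = h • w := by rw [inv_smul_eq_iff, ← mul_smul]; exact hw.symm
  obtain ⟨p, hp⟩ := hT.connected.exists_isPath w (h • w)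
  refine ⟨p.getVert (p.length / 2), ?_, ?_⟩
  · rw [← fixedBy_inv]
    exact hT.map_getVert_half_length (f := smulHom hact g⁻¹) (MulAction.injective _)
      (by rwa [← fixedBy_inv] at hg) p hp hw'
  · exact hT.map_getVert_half_length (f := smulHom hact h) (MulAction.injective h) hh p hp rfl

end Action

end SimpleGraph

theorem global_fixed_vertex_of_elliptic_general
    {V G : Type*} [Group G] [MulAction G V]
    (T : SimpleGraph V) (hT : T.IsTree)
    (hact : ∀ (g : G) (u v : V), T.Adj u v → T.Adj (g • u) (g • v))
    (hfg : Group.FG G)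
    (hell : ∀ g : G, ∃ v : V, g • v = v) :
    ∃ v : V, ∀ g : G, g • v = v := by
  obtain ⟨S, hS⟩ := hfg.out
  obtain ⟨v, hv⟩ := hT.biInter_nonempty S (fixedBy V)
    (fun g _ => hT.isAcyclic.isPathConvex_fixedBy hact g)
    fun g _ h _ => hT.fixedBy_inter_nonempty hact (hell g) (hell h) (hell (g * h))
  have hSv : Subgroup.closure (S : Set G) ≤ stabilizer G v :=
    (Subgroup.closure_le _).2 fun g hg => Set.mem_iInter₂.1 hv g hg
  rw [hS] at hSv
  exact ⟨v, fun g => hSv (Subgroup.mem_top g)⟩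

/-- A finitely generated group acting without inversions on a tree such that
every element fixes some vertex has a global fixed vertex. -/
theorem global_fixed_vertex_of_elliptic
    {V G : Type*} [Group G] [MulAction G V]
    (T : SimpleGraph V) (hT : T.IsTree)
    (hact : ∀ (g : G) (u v : V), T.Adj u v → T.Adj (g • u) (g • v))
    (hni : ∀ (g : G) (u v : V), T.Adj u v → ¬ (g • u = v ∧ g • v = u))
    (hfg : Group.FG G)
    (hell : ∀ g : G, ∃ v : V, g • v = v) :
    ∃ v : V, ∀ g : G, g • v = v :=
  global_fixed_vertex_of_elliptic_general T hT hact hfg hell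
end
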